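/- Let m, n be coprime positive integers. The number of (m,n)-Dyck paths D that equal their own rank complement is binomial(⌊m/2⌋+⌊n/2⌋, ⌊m/2⌋). -/

import Mathlib

open Nat

/-- Number of north steps among the first `i` steps of the path `P`
(`true` = north step `N`, `false` = east step `E`). -/
def nSteps (P : List Bool) (i : ℕ) : ℕ := (P.take i).count true

/-- Number of east steps among the first `i` steps. -/
def eSteps (P : List Bool) (i : ℕ) : ℕ := (P.take i).count false

/-- Rank `m*b - n*a` of the `i`-th lattice point `(a,b)` of the path. -/
def rank (m n : ℕ) (P : List Bool) (i : ℕ) : ℤ :=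
  (m : ℤ) * nSteps P i - (n : ℤ) * eSteps P i

/-- A lattice path from `(0,0)` to `(m,n)`: `m+n` unit steps, `n` of them north. -/
def IsPath (m n : ℕ) (P : List Bool) : Prop :=
  P.length = m + n ∧ P.count true = n

/-- An `(m,n)`-Dyck path: a path staying weakly above the diagonal,
equivalently with all ranks nonnegative. -/
def IsDyck (m n : ℕ) (P : List Bool) : Prop :=
  IsPath m n P ∧ ∀ i ≤ m + n, 0 ≤ rank m n P i

/-- The set of ranks of the first `m+n` lattice points of the path. -/
def rankSet (m n : ℕ) (P : List Bool) : Finset ℤ :=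
  (Finset.range (m + n)).image (rank m n P)

/-- Ranks of south ends (starting points of north steps). -/
def southRanks (m n : ℕ) (P : List Bool) : Finset ℤ :=
  ((Finset.range (m + n)).filter (fun i => P.getD i false = true)).image (rank m n P)

/-- Ranks of west ends (starting points of east steps). -/
def westRanks (m n : ℕ) (P : List Bool) : Finset ℤ :=
  ((Finset.range (m + n)).filter (fun i => P.getD i true = false)).image (rank m n P)

/-- Transpose of a path: reverse the word and exchange `N` and `E`. -/
def transpose (P : List Bool) : List Bool := (P.map (fun b => !b)).reverse

/-- `D'` is the rank complement of `D`: its rank set is `M - r(D)`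
where `M` is the maximum rank of `D`. -/
def IsRankComplement (m n : ℕ) (D D' : List Bool) : Prop :=
  ∃ M : ℤ, IsGreatest (↑(rankSet m n D) : Set ℤ) M ∧
    rankSet m n D' = (rankSet m n D).image (fun r => M - r)

/-- A partition, encoded as a weakly decreasing list of positive integers. -/
def IsPartition (L : List ℕ) : Prop :=
  L.Pairwise (· ≥ ·) ∧ ∀ x ∈ L, 0 < x

/-- Hook length of the cell in (0-based) row `i`, column `j`. -/
def hook (L : List ℕ) (i j : ℕ) : ℕ :=
  L.getD i 0 - j + (L.drop (i + 1)).countP (fun x => decide (j < x))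

/-- `L` is an `n`-core: no hook length is divisible by `n`. -/
def IsCore (n : ℕ) (L : List ℕ) : Prop :=
  ∀ i < L.length, ∀ j < L.getD i 0, ¬ (n ∣ hook L i j)

/-- The set of first-column hook lengths of `L`. -/
def firstColHooks (L : List ℕ) : Finset ℕ :=
  (Finset.range L.length).image (fun i => hook L i 0)

/-- Conjugate (transpose) partition. -/
def conjugate (L : List ℕ) : List ℕ :=
  (List.range (L.getD 0 0)).map (fun j => L.countP (fun x => decide (j < x)))

/-- `H` is `n`-flush: no element is a multiple of `n`, and it is closed
under subtracting `n` while staying positive. -/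
def IsFlush (n : ℕ) (H : Finset ℕ) : Prop :=
  (∀ h ∈ H, ¬ (n ∣ h)) ∧ ∀ h ∈ H, n < h → h - n ∈ H

/-- `s_i^n(H)`: the maximum of `((n+H) ∪ {i}) ∩ (i + nℤ)`. -/
def sFun (n : ℕ) (H : Finset ℕ) (i : ℕ) : ℕ :=
  (insert i ((H.filter (fun h => h % n = i % n)).image (fun h => h + n))).max'
    (Finset.insert_nonempty _ _)

/-- `S^n(H) = {s_0, ..., s_{n-1}}`. -/
def sSet (n : ℕ) (H : Finset ℕ) : Finset ℕ := (Finset.range n).image (sFun n H)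

/-- The lattice point `(a,b)` lies strictly to the right of the path `D`
inside the `m × n` rectangle: every lattice point of `D` at height `b`
has `x`-coordinate less than `a`. -/
def StrictlyRightOf (m n : ℕ) (D : List Bool) (a b : ℕ) : Prop :=
  a ≤ m ∧ b ≤ n ∧ ∀ i ≤ m + n, (D.take i).count true = b → (D.take i).count false < a

/-- The positive ranks of lattice points lying strictly to the right of `D`. -/
def andersonSet (m n : ℕ) (D : List Bool) : Set ℕ :=
  {h | 0 < h ∧ ∃ a b : ℕ, StrictlyRightOf m n D a b ∧ (h : ℤ) = (m : ℤ) * b - (n : ℤ) * a}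

/-- The `x`-coordinate of the vertical step of `D` at height `y`
(the number of east steps taken at heights `≤ y`). -/
def southX (D : List Bool) (y : ℕ) : ℕ :=
  (List.range D.length).countP
    (fun i => decide (D.getD i true = false ∧ (D.take i).count true ≤ y))

/-- The partition formed by the cells above the path `D`
inside a rectangle of height `n`. -/
def pathPartition (n : ℕ) (D : List Bool) : List ℕ :=
  (((List.range n).reverse).map (fun y => southX D y)).filter (fun x => decide (0 < x))

/-- Arm of the cell `(i,j)` of `L`. -/
def armL (L : List ℕ) (i j : ℕ) : ℕ := L.getD i 0 - (j + 1)

/-- Leg of the cell `(i,j)` of `L`. -/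
def legL (L : List ℕ) (i j : ℕ) : ℕ := (L.drop (i + 1)).countP (fun x => decide (j < x))

/-- The dinv statistic of an `(m,n)`-Dyck path: the number of cells `c` of the
partition above the path with `arm(c)/(leg(c)+1) ≤ m/n < (arm(c)+1)/leg(c)`. -/
def dinv (m n : ℕ) (D : List Bool) : ℕ :=
  ((Finset.range (pathPartition n D).length ×ˢ Finset.range m).filter
    (fun p => p.2 < (pathPartition n D).getD p.1 0 ∧
      armL (pathPartition n D) p.1 p.2 * n ≤ m * (legL (pathPartition n D) p.1 p.2 + 1) ∧
      m * legL (pathPartition n D) p.1 p.2 < n * (armL (pathPartition n D) p.1 p.2 + 1))).card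

/-- `codinv(D) = #{(r_s, r_w) : r_s ∈ S(D), r_w ∈ W(D), r_s < r_w}`. -/
def codinv (m n : ℕ) (D : List Bool) : ℕ :=
  ((southRanks m n D ×ˢ westRanks m n D).filter (fun p => p.1 < p.2)).card

/-- The skew length of an `(m,n)`-core: the number of cells lying both in an
`n`-row (a row `i` with `h_i + n ∈ S^n(H_λ)`) and in the `m`-boundary
(hook length `< m`). -/
def skewLength (m n : ℕ) (L : List ℕ) : ℕ :=
  ((Finset.range L.length ×ˢ Finset.range (L.headD 0)).filter
    (fun p => p.2 < L.getD p.1 0 ∧ hook L p.1 p.2 < m ∧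
      hook L p.1 0 + n ∈ sSet n (firstColHooks L))).card

/-!
Read a path `P` of length `L = m + n` cyclically, as a word `ZMod L → Bool`. Its ranks are the
partial sums of the steps `m` (north) and `-n` (east) and are `≡ m * j (mod L)`, so for coprime
`m, n` the ranks of the `L` lattice points are pairwise distinct. Consequently a Dyck path is its
own rank complement iff its cyclic word is invariant under a reflection `j ↦ c - j`; and, by the
cycle lemma, a cyclic word with `n` north steps has no rotational symmetry and exactly one rotation
which is a Dyck path, the one starting at its lowest point.

Moving the centre of the reflection to `0` (for even `L` there are two antipodal centres, and as
`n` is odd exactly one of them carries a north step) makes the cyclic word even, `w (-x) = w x`,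
with letter `[n odd]` at `0` and an east step at `L / 2` if `L` is even. Such a word is determined
by the set `A ⊆ {0, …, (L - 1) / 2 - 1}` of the `i` with a north step at `±(i + 1)`, and it has
`n` north steps iff `#A = ⌊n / 2⌋`. So self-complementary Dyck paths correspond to the
`⌊n / 2⌋`-subsets of a set with `(L - 1) / 2 = ⌊m / 2⌋ + ⌊n / 2⌋` elements.
-/

open Finset

lemma sum_range_eq_of_symm {M : Type*} [AddCommMonoid M] (h : ℕ → M) {L : ℕ} (hL : 0 < L)
    (hsymm : ∀ r ≤ L, h (L - r) = h r) :
    ∑ r ∈ range L, h r =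
      h 0 + (if Even L then h (L / 2) else 0) + 2 • ∑ i ∈ range ((L - 1) / 2), h (i + 1) := by
  set F := (L - 1) / 2
  have hsplit : ∀ e, L = 1 + F + e + F → ∑ r ∈ range L, h r =
      h 0 + ∑ i ∈ range e, h (1 + F + i) + 2 • ∑ i ∈ range F, h (i + 1) := by
    intro e he
    have hreflect : ∑ i ∈ range F, h (1 + F + e + i) = ∑ i ∈ range F, h (i + 1) := by
      rw [← sum_range_reflect]
      refine sum_congr rfl fun i hi => ?_
      rw [mem_range] at hi
      rw [← hsymm (i + 1) (by omega)]
      congr 1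
      omega
    rw [he, sum_range_add, sum_range_add, sum_range_add, sum_range_one, hreflect, two_nsmul]
    simp only [add_comm 1]
    abel
  rcases Nat.even_or_odd L with hev | hodd
  · rw [hsplit 1 (by obtain ⟨k, hk⟩ := hev; omega), if_pos hev, sum_range_one]
    congr 3
    obtain ⟨k, hk⟩ := hev
    omega
  · rw [hsplit 0 (by obtain ⟨k, hk⟩ := hodd; omega), if_neg (Nat.not_even_iff_odd.mpr hodd)]
    simp

section ZModHalf

variable {L : ℕ}

lemma two_mul_natCast_half (hL : Even L) : 2 * ((L / 2 : ℕ) : ZMod L) = 0 := by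
  rw [two_mul, ← Nat.cast_add, ← ZMod.natCast_self L]
  obtain ⟨k, hk⟩ := hL
  congr 1
  omega

variable [NeZero L]

lemma apply_eq_apply_zero_of_add_one {α : Type*} {f : ZMod L → α} (h : ∀ j, f (j + 1) = f j)
    (j : ZMod L) : f j = f 0 := by
  rw [← ZMod.natCast_zmod_val j]
  induction j.val with
  | zero => rw [Nat.cast_zero]
  | succ k ih => rw [Nat.cast_succ, h, ih]

lemma eq_zero_or_eq_half_of_two_mul_eq_zero {s : ZMod L} (h : 2 * s = 0) :
    s = 0 ∨ (Even L ∧ s = ((L / 2 : ℕ) : ZMod L)) := by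
  have hs := s.val_lt
  rw [← ZMod.natCast_zmod_val s] at h ⊢
  obtain ⟨q, hq⟩ : L ∣ 2 * s.val := by
    rw [← ZMod.natCast_eq_zero_iff]
    push_cast
    exact h
  have hq2 : q < 2 := Nat.lt_of_mul_lt_mul_left (a := L) (by omega)
  rcases (by omega : q = 0 ∨ q = 1) with rfl | rfl
  · left
    rw [show s.val = 0 by omega, Nat.cast_zero]
  · exact Or.inr ⟨⟨s.val, by omega⟩, by rw [show L / 2 = s.val by omega]⟩

lemma natCast_half_ne_zero (hL : Even L) : ((L / 2 : ℕ) : ZMod L) ≠ 0 := by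
  have := NeZero.ne L
  obtain ⟨k, hk⟩ := hL
  rw [Ne, ZMod.natCast_eq_zero_iff]
  exact fun h => absurd (Nat.le_of_dvd (by omega) h) (by omega)

lemma exists_eq_two_mul_or_eq_two_mul_add_one (c : ZMod L) :
    ∃ q, c = 2 * q ∨ c = 2 * q + 1 := by
  obtain ⟨q, r, hr, rfl⟩ : ∃ q r : ℕ, r < 2 ∧ c = ((2 * q + r : ℕ) : ZMod L) :=
    ⟨c.val / 2, c.val % 2, Nat.mod_lt _ two_pos, by rw [Nat.div_add_mod, ZMod.natCast_zmod_val]⟩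
  refine ⟨q, ?_⟩
  interval_cases r <;> simp

end ZModHalf

section CyclicWord

variable {L : ℕ}

def cyclicWord (P : List Bool) (j : ZMod L) : Bool := P.getD j.val false

def ofCyclic (L : ℕ) (g : ZMod L → Bool) : List Bool := (List.range L).map fun i : ℕ => g i

@[simp] lemma length_ofCyclic (g : ZMod L → Bool) : (ofCyclic L g).length = L := by
  simp [ofCyclic]

lemma cyclicWord_natCast (P : List Bool) {i : ℕ} (hi : i < L) :
    cyclicWord P (i : ZMod L) = P.getD i false := by
  rw [cyclicWord, ZMod.val_cast_of_lt hi]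

lemma eq_of_cyclicWord_eq {P Q : List Bool} (hP : P.length = L) (hQ : Q.length = L)
    (h : ∀ j : ZMod L, cyclicWord P j = cyclicWord Q j) : P = Q := by
  apply List.ext_getElem (hP.trans hQ.symm)
  intro i hiP hiQ
  have := h i
  rw [cyclicWord_natCast P (hP ▸ hiP), cyclicWord_natCast Q (hQ ▸ hiQ),
    List.getD_eq_getElem _ _ hiP, List.getD_eq_getElem _ _ hiQ] at this
  exact this

lemma count_true_ofCyclic (g : ZMod L → Bool) :
    (ofCyclic L g).count true = #{i ∈ range L | g ((i : ℕ) : ZMod L)} := by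
  suffices ∀ N, ((List.range N).map fun i : ℕ => g i).count true =
      #{i ∈ range N | g ((i : ℕ) : ZMod L)} from this L
  intro N
  induction N with
  | zero => simp
  | succ N ih => cases h : g N <;> simp [List.range_succ, range_add_one, filter_insert, ih, h]

variable [NeZero L]

lemma cyclicWord_rotate {P : List Bool} (hP : P.length = L) (k : ℕ) (j : ZMod L) :
    cyclicWord (P.rotate k) j = cyclicWord P (j + (k : ZMod L)) := by
  have hj := ZMod.val_lt j
  have hjk := ZMod.val_lt (j + (k : ZMod L))
  rw [cyclicWord, cyclicWord, List.getD_eq_getElem _ _ (by simpa [hP] using hj),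
    List.getD_eq_getElem _ _ (by simpa [hP] using hjk), List.getElem_rotate]
  simp [ZMod.val_add, ZMod.val_natCast, hP]

lemma cyclicWord_ofCyclic (g : ZMod L → Bool) (j : ZMod L) :
    cyclicWord (ofCyclic L g) j = g j := by
  have hj := ZMod.val_lt j
  rw [cyclicWord, List.getD_eq_getElem _ _ (by simpa using hj)]
  simp [ofCyclic]

lemma ofCyclic_add_eq_rotate {P : List Bool} (hP : P.length = L) (t : ZMod L) :
    ofCyclic L (fun x => cyclicWord P (x + t)) = P.rotate t.val :=
  eq_of_cyclicWord_eq (length_ofCyclic _) (by simp [hP]) fun j => by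
    rw [cyclicWord_ofCyclic, cyclicWord_rotate hP, ZMod.natCast_zmod_val]

lemma count_true_ofCyclic_of_even {g : ZMod L → Bool} (hg : ∀ x, g (-x) = g x) :
    (ofCyclic L g).count true = (if g 0 then 1 else 0) +
      (if Even L then (if g ((L / 2 : ℕ) : ZMod L) then 1 else 0) else 0) +
      2 * #{i ∈ range ((L - 1) / 2) | g ((i + 1 : ℕ) : ZMod L)} := by
  rw [count_true_ofCyclic, card_filter, card_filter,
    sum_range_eq_of_symm _ (Nat.pos_of_neZero L) fun r hr => ?_]
  · simp
  · rw [Nat.cast_sub hr, ZMod.natCast_self, zero_sub, hg]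

end CyclicWord

section EvenWord

variable {L : ℕ}

/-- `x.valMinAbs.natAbs` is the distance from `x` to `0`: this is the even cyclic word with letter
`b` at `0` and north steps exactly at the points `±(i + 1)` with `i ∈ A`. -/
def evenWord (b : Bool) (A : Finset ℕ) (x : ZMod L) : Bool :=
  if x = 0 then b else decide (x.valMinAbs.natAbs - 1 ∈ A)

lemma evenWord_neg (b : Bool) (A : Finset ℕ) (x : ZMod L) :
    evenWord b A (-x) = evenWord b A x := by
  simp [evenWord, ZMod.natAbs_valMinAbs_neg]

lemma evenWord_natCast_succ (b : Bool) (A : Finset ℕ) {i : ℕ} (hi : i < (L - 1) / 2) :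
    evenWord b A ((i + 1 : ℕ) : ZMod L) = decide (i ∈ A) := by
  have hne : ((i + 1 : ℕ) : ZMod L) ≠ 0 := by
    intro h
    have := congrArg ZMod.val h
    rw [ZMod.val_cast_of_lt (by omega), ZMod.val_zero] at this
    omega
  rw [evenWord, if_neg hne, ZMod.valMinAbs_natCast_of_le_half (by omega), Int.natAbs_natCast,
    Nat.add_sub_cancel]

lemma evenWord_injective (b : Bool) {A A' : Finset ℕ} (hA : A ⊆ range ((L - 1) / 2))
    (hA' : A' ⊆ range ((L - 1) / 2)) (h : evenWord b A = (evenWord b A' : ZMod L → Bool)) :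
    A = A' := by
  ext i
  by_cases hi : i < (L - 1) / 2
  · have := congrFun h ((i + 1 : ℕ) : ZMod L)
    rwa [evenWord_natCast_succ b _ hi, evenWord_natCast_succ b _ hi, decide_eq_decide] at this
  · exact iff_of_false (fun h => hi (mem_range.mp (hA h))) (fun h => hi (mem_range.mp (hA' h)))

variable [NeZero L]

lemma evenWord_half (b : Bool) {A : Finset ℕ} (hA : A ⊆ range ((L - 1) / 2)) (hL : Even L) :
    evenWord b A ((L / 2 : ℕ) : ZMod L) = false := by
  rw [evenWord, if_neg (natCast_half_ne_zero hL), ZMod.valMinAbs_natCast_of_le_half le_rfl]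
  obtain ⟨k, hk⟩ := hL
  simpa using fun h => absurd (mem_range.mp (hA h)) (by omega)

lemma count_true_ofCyclic_evenWord (b : Bool) {A : Finset ℕ} (hA : A ⊆ range ((L - 1) / 2)) :
    (ofCyclic L (evenWord b A)).count true = (if b then 1 else 0) + 2 * #A := by
  rw [count_true_ofCyclic_of_even (evenWord_neg b A)]
  have hfilter : {i ∈ range ((L - 1) / 2) | evenWord b A ((i + 1 : ℕ) : ZMod L)} = A := by
    ext i
    simp only [mem_filter, mem_range]
    constructor
    · rintro ⟨hi, h⟩
      rwa [evenWord_natCast_succ b A hi, decide_eq_true_iff] at h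
    · intro h
      have hi := mem_range.mp (hA h)
      rw [evenWord_natCast_succ b A hi, decide_eq_true_iff]
      exact ⟨hi, h⟩
  have hhalf :
      (if Even L then (if evenWord b A ((L / 2 : ℕ) : ZMod L) then 1 else 0) else 0) = 0 := by
    by_cases hL : Even L
    · rw [if_pos hL, evenWord_half b hA hL]
      rfl
    · rw [if_neg hL]
  rw [hfilter, hhalf, add_zero, evenWord, if_pos rfl]

lemma eq_evenWord {g : ZMod L → Bool} (hg : ∀ x, g (-x) = g x)
    (hhalf : Even L → g ((L / 2 : ℕ) : ZMod L) = false) :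
    g = evenWord (g 0) {i ∈ range ((L - 1) / 2) | g ((i + 1 : ℕ) : ZMod L)} := by
  funext x
  by_cases hx : x = 0
  · simp [evenWord, hx]
  set d := x.valMinAbs.natAbs with hd
  have hgx : g x = g d := by
    rw [hd, ZMod.natCast_natAbs_valMinAbs]
    split_ifs <;> simp [hg]
  have hd0 : d ≠ 0 := by simpa [hd] using hx
  have hdle : d ≤ L / 2 := ZMod.natAbs_valMinAbs_le x
  rw [evenWord, if_neg hx, ← hd, hgx]
  simp only [mem_filter, mem_range]
  by_cases hdF : d - 1 < (L - 1) / 2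
  · simp [hdF, Nat.sub_add_cancel (Nat.pos_of_ne_zero hd0)]
  · have hL : Even L := Nat.even_iff.mpr (by omega)
    rw [show d = L / 2 by omega, hhalf hL]
    simp [show ¬ (L / 2 - 1 < (L - 1) / 2) by omega]

end EvenWord

section Rank

variable {m n : ℕ}

def stepRank (m n : ℕ) (b : Bool) : ℤ := if b then (m : ℤ) else -(n : ℤ)

def cyclicRank (m n : ℕ) (P : List Bool) (j : ZMod (m + n)) : ℤ := rank m n P j.val

lemma rank_zero (P : List Bool) : rank m n P 0 = 0 := by
  simp [rank, nSteps, eSteps]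

lemma rank_succ (P : List Bool) {i : ℕ} (hi : i < P.length) :
    rank m n P (i + 1) = rank m n P i + stepRank m n (P.getD i false) := by
  rw [rank, rank, nSteps, eSteps, nSteps, eSteps, List.take_add_one, List.getElem?_eq_getElem hi,
    List.getD_eq_getElem _ _ hi]
  cases P[i] <;> simp [stepRank] <;> ring

lemma rank_length {P : List Bool} (hP : IsPath m n P) : rank m n P (m + n) = 0 := by
  have hcount := List.count_true_add_count_false P
  rw [rank, nSteps, eSteps, List.take_of_length_le hP.1.le, hP.2]
  rw [hP.1, hP.2] at hcount
  rw [show P.count false = m by omega]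
  ring

lemma isPath_rotate {P : List Bool} (hP : IsPath m n P) (k : ℕ) : IsPath m n (P.rotate k) :=
  ⟨by rw [List.length_rotate, hP.1], by rw [(List.rotate_perm P k).count_eq, hP.2]⟩

lemma cyclicRank_zero (P : List Bool) : cyclicRank m n P 0 = 0 := by
  rw [cyclicRank, ZMod.val_zero, rank_zero]

lemma isUnit_natCast_of_coprime (hco : Nat.Coprime m n) : IsUnit (m : ZMod (m + n)) :=
  (ZMod.isUnit_iff_coprime m (m + n)).mpr (Nat.coprime_self_add_right.mpr hco)

variable [NeZero (m + n)]

lemma rankSet_eq_image (P : List Bool) :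
    rankSet m n P = univ.image (cyclicRank m n P) := by
  ext r
  simp only [rankSet, cyclicRank, mem_image, mem_range, mem_univ, true_and]
  constructor
  · rintro ⟨i, hi, rfl⟩
    exact ⟨i, by rw [ZMod.val_cast_of_lt hi]⟩
  · rintro ⟨j, rfl⟩
    exact ⟨j.val, j.val_lt, rfl⟩

lemma stepRank_injective : Function.Injective (stepRank m n) := by
  have := NeZero.ne (m + n)
  intro b b' h
  cases b <;> cases b' <;> simp [stepRank] at h ⊢ <;> omega

lemma cyclicRank_add_one {P : List Bool} (hP : IsPath m n P) (j : ZMod (m + n)) :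
    cyclicRank m n P (j + 1) = cyclicRank m n P j + stepRank m n (cyclicWord P j) := by
  have hj := j.val_lt
  have hval : (j + 1).val = (j.val + 1) % (m + n) := by
    rw [← ZMod.val_natCast, Nat.cast_add, ZMod.natCast_zmod_val, Nat.cast_one]
  rw [cyclicRank, cyclicRank, hval, cyclicWord, ← rank_succ P (by rw [hP.1]; exact hj)]
  rcases (by omega : j.val + 1 < m + n ∨ j.val + 1 = m + n) with h | h
  · rw [Nat.mod_eq_of_lt h]
  · rw [h, Nat.mod_self, rank_zero, rank_length hP]

lemma intCast_cyclicRank {P : List Bool} (hP : P.length = m + n) (j : ZMod (m + n)) :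
    ((cyclicRank m n P j : ℤ) : ZMod (m + n)) = m * j := by
  have hcount := List.count_true_add_count_false (P.take j.val)
  rw [List.length_take, hP, min_eq_left j.val_lt.le] at hcount
  have hn : (n : ZMod (m + n)) = -m :=
    eq_neg_of_add_eq_zero_right (by rw [← Nat.cast_add, ZMod.natCast_self])
  conv_rhs => rw [← ZMod.natCast_zmod_val j, ← hcount]
  rw [cyclicRank, rank, nSteps, eSteps]
  push_cast
  rw [hn]
  ring

lemma cyclicRank_injective {P : List Bool} (hP : P.length = m + n) (hco : Nat.Coprime m n) :
    Function.Injective (cyclicRank m n P) := fun i j h =>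
  (isUnit_natCast_of_coprime hco).mul_left_cancel <| by
    rw [← intCast_cyclicRank hP, ← intCast_cyclicRank hP, h]

lemma isDyck_iff {P : List Bool} (hP : IsPath m n P) :
    IsDyck m n P ↔ ∀ j, 0 ≤ cyclicRank m n P j := by
  constructor
  · rintro ⟨-, h⟩ j
    exact h _ j.val_lt.le
  · refine fun h => ⟨hP, fun i hi => ?_⟩
    rcases hi.lt_or_eq with hi | rfl
    · simpa [cyclicRank, ZMod.val_cast_of_lt hi] using h i
    · rw [rank_length hP]

lemma cyclicRank_eq_of_shift {P Q : List Bool} (hP : IsPath m n P) (hQ : IsPath m n Q)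
    {t : ZMod (m + n)} (h : ∀ j, cyclicWord Q j = cyclicWord P (j + t)) (j : ZMod (m + n)) :
    cyclicRank m n Q j = cyclicRank m n P (j + t) - cyclicRank m n P t := by
  have := apply_eq_apply_zero_of_add_one
    (f := fun j => cyclicRank m n Q j - cyclicRank m n P (j + t)) (fun j => by
      rw [cyclicRank_add_one hQ, add_right_comm, cyclicRank_add_one hP, h]
      ring) j
  simp only [cyclicRank_zero, zero_add] at this
  linarith

lemma cyclicRank_eq_of_reflect {P : List Bool} (hP : IsPath m n P) {c : ZMod (m + n)}
    (h : ∀ j, cyclicWord P (c - j) = cyclicWord P j) (j : ZMod (m + n)) :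
    cyclicRank m n P (c + 1 - j) = cyclicRank m n P (c + 1) - cyclicRank m n P j := by
  have := apply_eq_apply_zero_of_add_one
    (f := fun j => cyclicRank m n P (c + 1 - j) + cyclicRank m n P j) (fun j => by
      rw [show c + 1 - j = c - j + 1 by ring, cyclicRank_add_one hP (c - j), h,
        show c + 1 - (j + 1) = c - j by ring, cyclicRank_add_one hP]
      ring) j
  simp only [cyclicRank_zero, sub_zero, add_zero] at this
  linarith

lemma cyclicWord_reflect_of_cyclicRank {P : List Bool} (hP : IsPath m n P) {k : ZMod (m + n)}
    {M : ℤ} (h : ∀ j, cyclicRank m n P (k - j) = M - cyclicRank m n P j) (j : ZMod (m + n)) :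
    cyclicWord P (k - 1 - j) = cyclicWord P j := by
  apply stepRank_injective (m := m) (n := n)
  have e1 : cyclicRank m n P (k - 1 - j + 1) = M - cyclicRank m n P j := by
    rw [show k - 1 - j + 1 = k - j by ring, h]
  have e2 : cyclicRank m n P (k - 1 - j) = M - cyclicRank m n P (j + 1) := by
    rw [show k - 1 - j = k - (j + 1) by ring, h]
  linarith [cyclicRank_add_one hP (k - 1 - j), cyclicRank_add_one hP j]

lemma isRankComplement_self_iff {D : List Bool} (hD : IsDyck m n D) (hco : Nat.Coprime m n) :
    IsRankComplement m n D D ↔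
      ∃ c : ZMod (m + n), ∀ j, cyclicWord D (c - j) = cyclicWord D j := by
  constructor
  · rintro ⟨M, hM, himage⟩
    rw [rankSet_eq_image] at hM himage
    obtain ⟨k, -, hk⟩ := mem_image.mp hM.1
    refine ⟨k - 1, cyclicWord_reflect_of_cyclicRank hD.1 (M := M) fun j => ?_⟩
    have hmem : ∀ r ∈ univ.image (cyclicRank m n D), M - r ∈ univ.image (cyclicRank m n D) :=
      fun r hr => himage ▸ mem_image_of_mem _ hr
    obtain ⟨i, -, hi⟩ := mem_image.mp (hmem _ (mem_image_of_mem _ (mem_univ j)))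
    have hik : i = k - j := (isUnit_natCast_of_coprime hco).mul_left_cancel <| by
      rw [← intCast_cyclicRank hD.1.1, hi, ← hk]
      push_cast
      rw [intCast_cyclicRank hD.1.1, intCast_cyclicRank hD.1.1]
      ring
    rw [← hik, hi]
  · rintro ⟨c, hc⟩
    have hreflect := cyclicRank_eq_of_reflect hD.1 hc
    have hnonneg := (isDyck_iff hD.1).mp hD
    refine ⟨cyclicRank m n D (c + 1), ⟨?_, ?_⟩, ?_⟩
    · rw [rankSet_eq_image]
      exact mem_image_of_mem _ (mem_univ _)
    · rintro r hr
      rw [rankSet_eq_image, coe_image] at hr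
      obtain ⟨j, -, rfl⟩ := hr
      linarith [hreflect j, hnonneg (c + 1 - j)]
    · have hsurj : Function.Surjective fun j : ZMod (m + n) => c + 1 - j :=
        fun j : ZMod (m + n) => ⟨c + 1 - j, sub_sub_cancel (c + 1) j⟩
      rw [rankSet_eq_image]
      calc univ.image (cyclicRank m n D)
          = (univ.image fun j => c + 1 - j).image (cyclicRank m n D) := by
            rw [image_univ_of_surjective hsurj]
        _ = univ.image fun j => cyclicRank m n D (c + 1) - cyclicRank m n D j := by
            rw [image_image]
            exact image_congr fun j _ => hreflect j
        _ = (univ.image (cyclicRank m n D)).image (cyclicRank m n D (c + 1) - ·) := by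
            rw [image_image]
            rfl

lemma eq_zero_of_cyclicWord_add {P : List Bool} (hP : IsPath m n P) (hco : Nat.Coprime m n)
    {d : ZMod (m + n)} (h : ∀ x, cyclicWord P (x + d) = cyclicWord P x) : d = 0 := by
  have hadd (x) : cyclicRank m n P (x + d) = cyclicRank m n P x + cyclicRank m n P d := by
    linarith [cyclicRank_eq_of_shift hP hP (fun j => (h j).symm) x]
  have hmul : ∀ k : ℕ, cyclicRank m n P (k * d) = k * cyclicRank m n P d := by
    intro k
    induction k with
    | zero => simp [cyclicRank_zero]
    | succ k ih => rw [Nat.cast_succ, _root_.add_one_mul, hadd, ih]; push_cast; ring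
  have hL := hmul (m + n)
  rw [ZMod.natCast_self, zero_mul, cyclicRank_zero, eq_comm, _root_.mul_eq_zero] at hL
  have hd : cyclicRank m n P d = 0 := hL.resolve_left (by exact_mod_cast NeZero.ne (m + n))
  exact cyclicRank_injective hP.1 hco (hd.trans (cyclicRank_zero P).symm)

lemma exists_two_mul_eq_of_reflect {P : List Bool} (hP : IsPath m n P) (hco : Nat.Coprime m n)
    {c : ZMod (m + n)} (hc : ∀ j, cyclicWord P (c - j) = cyclicWord P j) : ∃ t, 2 * t = c := by
  obtain ⟨q, rfl | rfl⟩ := exists_eq_two_mul_or_eq_two_mul_add_one c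
  · exact ⟨q, rfl⟩
  by_cases hL : Even (m + n)
  · -- `j ↦ c + 1 - j` would have the two fixed points `q + 1` and `q + 1 + (m + n) / 2`,
    -- at both of which the rank is half the rank at `c + 1`
    exfalso
    set half : ZMod (m + n) := (((m + n) / 2 : ℕ) : ZMod (m + n))
    have hfixed : ∀ w, 2 * w = 2 * q + 1 + 1 →
        2 * cyclicRank m n P w = cyclicRank m n P (2 * q + 1 + 1) := fun w hw => by
      have := cyclicRank_eq_of_reflect hP hc w
      rw [show 2 * q + 1 + 1 - w = w by rw [← hw]; ring] at this
      linarith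
    have h2 : 2 * half = 0 := two_mul_natCast_half hL
    have := cyclicRank_injective hP.1 hco (a₁ := q + 1) (a₂ := q + 1 + half) (by
      linarith [hfixed (q + 1) (by ring), hfixed (q + 1 + half) (by linear_combination h2)])
    exact natCast_half_ne_zero hL (by linear_combination -this)
  · obtain ⟨k, hk⟩ := Nat.not_even_iff_odd.mp hL
    have hL0 : 2 * ((k : ℕ) : ZMod (m + n)) + 1 = 0 := by
      rw [← ZMod.natCast_self (m + n), hk]
      push_cast
      ring
    exact ⟨q + k + 1, by linear_combination hL0⟩

end Rank

section DyckRotation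

variable {m n : ℕ} [NeZero (m + n)]

noncomputable def minRankPoint (m n : ℕ) [NeZero (m + n)] (P : List Bool) : ZMod (m + n) :=
  (univ.exists_min_image (cyclicRank m n P) univ_nonempty).choose

lemma cyclicRank_minRankPoint_le (P : List Bool) (j : ZMod (m + n)) :
    cyclicRank m n P (minRankPoint m n P) ≤ cyclicRank m n P j :=
  (univ.exists_min_image (cyclicRank m n P) univ_nonempty).choose_spec.2 j (mem_univ j)

noncomputable def dyckRotation (m n : ℕ) [NeZero (m + n)] (P : List Bool) : List Bool :=
  P.rotate (minRankPoint m n P).val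

lemma cyclicWord_dyckRotation {P : List Bool} (hP : P.length = m + n) (j : ZMod (m + n)) :
    cyclicWord (dyckRotation m n P) j = cyclicWord P (j + minRankPoint m n P) := by
  rw [dyckRotation, cyclicWord_rotate hP, ZMod.natCast_zmod_val]

lemma isDyck_dyckRotation {P : List Bool} (hP : IsPath m n P) :
    IsDyck m n (dyckRotation m n P) := by
  have hQ := isPath_rotate hP (minRankPoint m n P).val
  refine (isDyck_iff hQ).mpr fun j => ?_
  rw [cyclicRank_eq_of_shift hP hQ (cyclicWord_dyckRotation hP.1)]
  linarith [cyclicRank_minRankPoint_le P (j + minRankPoint m n P)]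

lemma isPath_ofCyclic_add {P : List Bool} (hP : IsPath m n P) (t : ZMod (m + n)) :
    IsPath m n (ofCyclic (m + n) fun x => cyclicWord P (x + t)) := by
  rw [ofCyclic_add_eq_rotate hP.1]
  exact isPath_rotate hP _

lemma eq_of_cyclicWord_eq_add {P Q : List Bool} (hP : IsDyck m n P) (hQ : IsDyck m n Q)
    (hco : Nat.Coprime m n) {t : ZMod (m + n)} (h : ∀ j, cyclicWord Q j = cyclicWord P (j + t)) :
    Q = P := by
  have hs := cyclicRank_eq_of_shift hP.1 hQ.1 h (-t)
  rw [neg_add_cancel, cyclicRank_zero, zero_sub] at hs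
  have h0 : cyclicRank m n P t = 0 :=
    le_antisymm (by linarith [(isDyck_iff hQ.1).mp hQ (-t)]) ((isDyck_iff hP.1).mp hP t)
  have ht : t = 0 := cyclicRank_injective hP.1.1 hco (h0.trans (cyclicRank_zero P).symm)
  exact eq_of_cyclicWord_eq hQ.1.1 hP.1.1 fun j => by rw [h, ht, add_zero]

end DyckRotation

lemma Nat.Coprime.mod_two_eq_one_or {m n : ℕ} (hco : Nat.Coprime m n) :
    m % 2 = 1 ∨ n % 2 = 1 := by
  by_contra! h
  exact Nat.not_coprime_of_dvd_of_dvd one_lt_two (Nat.dvd_of_mod_eq_zero (by omega))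
    (Nat.dvd_of_mod_eq_zero (by omega)) hco

section SelfComplementary

variable {m n : ℕ} [NeZero (m + n)]

noncomputable def selfComplementaryPath (m n : ℕ) [NeZero (m + n)] (A : Finset ℕ) : List Bool :=
  dyckRotation m n (ofCyclic (m + n) (evenWord (decide (n % 2 = 1)) A))

lemma isPath_ofCyclic_evenWord {A : Finset ℕ} (hA : A ⊆ range ((m + n - 1) / 2))
    (hcard : #A = n / 2) :
    IsPath m n (ofCyclic (m + n) (evenWord (decide (n % 2 = 1)) A)) := by
  refine ⟨length_ofCyclic _, ?_⟩
  rw [count_true_ofCyclic_evenWord _ hA, hcard]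
  split_ifs with h <;> simp only [decide_eq_true_eq] at h <;> omega

lemma exists_cyclicWord_selfComplementaryPath (A : Finset ℕ) : ∃ p : ZMod (m + n),
    ∀ j, cyclicWord (selfComplementaryPath m n A) j = evenWord (decide (n % 2 = 1)) A (j + p) :=
  ⟨_, fun j => by
    rw [selfComplementaryPath, cyclicWord_dyckRotation (length_ofCyclic _), cyclicWord_ofCyclic]⟩

lemma isDyck_selfComplementaryPath {A : Finset ℕ} (hA : A ⊆ range ((m + n - 1) / 2))
    (hcard : #A = n / 2) : IsDyck m n (selfComplementaryPath m n A) :=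
  isDyck_dyckRotation (isPath_ofCyclic_evenWord hA hcard)

lemma isRankComplement_selfComplementaryPath {A : Finset ℕ} (hA : A ⊆ range ((m + n - 1) / 2))
    (hcard : #A = n / 2) (hco : Nat.Coprime m n) :
    IsRankComplement m n (selfComplementaryPath m n A) (selfComplementaryPath m n A) := by
  obtain ⟨p, hp⟩ := exists_cyclicWord_selfComplementaryPath (m := m) (n := n) A
  refine (isRankComplement_self_iff (isDyck_selfComplementaryPath hA hcard) hco).mpr
    ⟨-2 * p, fun j => ?_⟩
  rw [hp, hp, show -2 * p - j + p = -(j + p) by ring, evenWord_neg]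

lemma selfComplementaryPath_injective (hco : Nat.Coprime m n) {A A' : Finset ℕ}
    (hA : A ⊆ range ((m + n - 1) / 2)) (hcard : #A = n / 2)
    (hA' : A' ⊆ range ((m + n - 1) / 2))
    (h : selfComplementaryPath m n A = selfComplementaryPath m n A') :
    A = A' := by
  obtain ⟨p, hp⟩ := exists_cyclicWord_selfComplementaryPath (m := m) (n := n) A
  obtain ⟨p', hp'⟩ := exists_cyclicWord_selfComplementaryPath (m := m) (n := n) A'
  set b := decide (n % 2 = 1)
  have hshift : ∀ x, evenWord b A' x = evenWord b A (x + (p - p')) := fun x => by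
    have := congrArg (cyclicWord · (x - p')) h
    simp only [hp, hp', sub_add_cancel] at this
    rw [← this]
    congr 1
    ring
  -- even about `0` and about `p - p'`, the word is `2 * (p - p')`-periodic
  have hperiod : ∀ x, evenWord b A (x + 2 * (p - p')) = evenWord b A x := fun x => by
    rw [show x + 2 * (p - p') = x + (p - p') + (p - p') by ring, ← hshift, ← evenWord_neg,
      hshift, show -(x + (p - p')) + (p - p') = -x by ring, evenWord_neg]
  have hs : p - p' = 0 := by
    rcases eq_zero_or_eq_half_of_two_mul_eq_zero (eq_zero_of_cyclicWord_add
      (isPath_ofCyclic_evenWord hA hcard) hco (d := 2 * (p - p')) fun x => by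
        rw [cyclicWord_ofCyclic, cyclicWord_ofCyclic]
        exact hperiod x) with hs | ⟨hL, hs⟩
    · exact hs
    · have hb : b = true := by
        have := hco.mod_two_eq_one_or
        obtain ⟨k, hk⟩ := hL
        simp only [b, decide_eq_true_eq]
        omega
      have := hshift 0
      rw [zero_add, hs, evenWord_half b hA hL, evenWord, if_pos rfl, hb] at this
      exact absurd this (by decide)
  exact (evenWord_injective b hA' hA (funext fun x => by rw [hshift, hs, add_zero])).symm

lemma exists_even_rotation {D : List Bool} (hD : IsDyck m n D) (hco : Nat.Coprime m n)
    (hRC : IsRankComplement m n D D) : ∃ t : ZMod (m + n),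
      (∀ x, cyclicWord D (-x + t) = cyclicWord D (x + t)) ∧
      cyclicWord D t = decide (n % 2 = 1) ∧
      (Even (m + n) → cyclicWord D ((((m + n) / 2 : ℕ) : ZMod (m + n)) + t) = false) := by
  obtain ⟨c, hc⟩ := (isRankComplement_self_iff hD hco).mp hRC
  obtain ⟨t, rfl⟩ := exists_two_mul_eq_of_reflect hD.1 hco hc
  have heven : ∀ s, 2 * s = 2 * t → ∀ x, cyclicWord D (-x + s) = cyclicWord D (x + s) :=
    fun s hs x => by rw [← hc (x + s), show 2 * t - (x + s) = -x + s by linear_combination -hs]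
  have hcount := fun s (hs : 2 * s = 2 * t) => (isPath_ofCyclic_add hD.1 s).2.symm.trans
    (count_true_ofCyclic_of_even (g := fun x => cyclicWord D (x + s)) (heven s hs))
  set half : ZMod (m + n) := (((m + n) / 2 : ℕ) : ZMod (m + n))
  by_cases hL : Even (m + n)
  · have hn : n % 2 = 1 := by
      obtain ⟨k, hk⟩ := hL
      rcases hco.mod_two_eq_one_or with hm | hn <;> omega
    have h2 : 2 * half = 0 := two_mul_natCast_half hL
    have hnt := hcount t rfl
    simp only [zero_add, if_pos hL] at hnt
    cases ht : cyclicWord D t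
    · refine ⟨half + t, heven _ (by linear_combination h2), ?_, fun _ => ?_⟩
      · cases hh : cyclicWord D (half + t) <;> simp [ht, hh] at hnt ⊢ <;> omega
      · rw [← add_assoc, ← two_mul, h2, zero_add, ht]
    · refine ⟨t, heven t rfl, by simp [ht, hn], fun _ => ?_⟩
      cases hh : cyclicWord D (half + t) <;> simp [ht, hh] at hnt ⊢
      omega
  · refine ⟨t, heven t rfl, ?_, fun hL' => absurd hL' hL⟩
    have hnt := hcount t rfl
    simp only [zero_add, if_neg hL] at hnt
    cases ht : cyclicWord D t <;> simp [ht] at hnt ⊢ <;> omega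

lemma exists_eq_selfComplementaryPath {D : List Bool} (hD : IsDyck m n D) (hco : Nat.Coprime m n)
    (hRC : IsRankComplement m n D D) :
    ∃ A ⊆ range ((m + n - 1) / 2), #A = n / 2 ∧ selfComplementaryPath m n A = D := by
  obtain ⟨t, hsym, ht, hhalf⟩ := exists_even_rotation hD hco hRC
  set g : ZMod (m + n) → Bool := fun x => cyclicWord D (x + t) with hg_def
  set A := {i ∈ range ((m + n - 1) / 2) | g ((i + 1 : ℕ) : ZMod (m + n))}
  have hg : g = evenWord (decide (n % 2 = 1)) A := by
    have := eq_evenWord (g := g) hsym hhalf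
    rwa [show g 0 = decide (n % 2 = 1) by simp [g, ht]] at this
  have hcard : #A = n / 2 := by
    have := (isPath_ofCyclic_add hD.1 t).2
    rw [← hg_def, hg, count_true_ofCyclic_evenWord _ (filter_subset _ _)] at this
    change _ + 2 * #A = n at this
    split_ifs at this with h <;> simp only [decide_eq_true_eq] at h <;> omega
  refine ⟨A, filter_subset _ _, hcard, ?_⟩
  obtain ⟨p, hp⟩ := exists_cyclicWord_selfComplementaryPath (m := m) (n := n) A
  exact eq_of_cyclicWord_eq_add hD (isDyck_selfComplementaryPath (filter_subset _ _) hcard) hco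
    (t := p + t) fun j => by
      rw [hp, ← hg]
      exact congrArg (cyclicWord D) (add_assoc j p t)

end SelfComplementary

lemma setOf_isDyck_isRankComplement_eq_image {m n : ℕ} [NeZero (m + n)] (hco : Nat.Coprime m n) :
    {D : List Bool | IsDyck m n D ∧ IsRankComplement m n D D} =
      selfComplementaryPath m n '' ↑((range ((m + n - 1) / 2)).powersetCard (n / 2)) := by
  ext D
  constructor
  · rintro ⟨hD, hRC⟩
    obtain ⟨A, hA, hcard, rfl⟩ := exists_eq_selfComplementaryPath hD hco hRC
    exact ⟨A, mem_powersetCard.mpr ⟨hA, hcard⟩, rfl⟩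
  · rintro ⟨A, hA, rfl⟩
    obtain ⟨hA, hcard⟩ := mem_powersetCard.mp hA
    exact ⟨isDyck_selfComplementaryPath hA hcard,
      isRankComplement_selfComplementaryPath hA hcard hco⟩

theorem card_self_rank_complement_general (m n : ℕ) (hco : Nat.Coprime m n) :
    {D : List Bool | IsDyck m n D ∧ IsRankComplement m n D D}.ncard =
      (m / 2 + n / 2).choose (m / 2) := by
  have : NeZero (m + n) := ⟨fun h => by simp_all⟩
  have hinj : Set.InjOn (selfComplementaryPath m n)
      ↑((range ((m + n - 1) / 2)).powersetCard (n / 2)) :=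
    fun A hA A' hA' h => selfComplementaryPath_injective hco (mem_powersetCard.mp hA).1
      (mem_powersetCard.mp hA).2 (mem_powersetCard.mp hA').1 h
  have hF : (m + n - 1) / 2 = m / 2 + n / 2 := by
    rcases hco.mod_two_eq_one_or with h | h <;> omega
  rw [setOf_isDyck_isRankComplement_eq_image hco, hinj.ncard_image, Set.ncard_coe_finset,
    card_powersetCard, card_range, hF, Nat.choose_symm_add]

/-- For coprime positive `m, n`, the number of `(m,n)`-Dyck paths
equal to their own rank complement is `binomial(⌊m/2⌋+⌊n/2⌋, ⌊m/2⌋)`. -/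
theorem card_self_rank_complement (m n : ℕ) (hm : 0 < m) (hn : 0 < n)
    (hco : Nat.Coprime m n) :
    {D : List Bool | IsDyck m n D ∧ IsRankComplement m n D D}.ncard =
      (m / 2 + n / 2).choose (m / 2) :=
  card_self_rank_complement_general m n hco
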